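/- Let H = p₁² + p₂² + a·q₁^(-2/3) + b·q₂^(-2/3) on q₁ > 0, q₂ > 0, and let Y₆ = p₁²p₂²(p₁q₂ - p₂q₁)² + 2(p₁q₂ - p₂q₁)[a·p₂²(q₂p₁ - 2q₁p₂)·q₁^(-2/3) + b·p₁²(2q₂p₁ - q₁p₂)·q₂^(-2/3)] + a²q₂²p₂²·q₁^(-4/3) + 2ab(4q₂²p₁² - 9q₁q₂p₁p₂ + 4q₁²p₂²)·q₁^(-2/3)q₂^(-2/3) + b²q₁²p₁²·q₂^(-4/3) + 4ab(a·q₂^(4/3)·q₁^(-4/3) + b·q₁^(4/3)·q₂^(-4/3)). Then {H, Y₆} = 0. -/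

import Mathlib

noncomputable def pb (F G : ℝ → ℝ → ℝ → ℝ → ℝ) (q1 q2 p1 p2 : ℝ) : ℝ :=
  deriv (fun x => F x q2 p1 p2) q1 * deriv (fun x => G q1 q2 x p2) p1
  + deriv (fun x => F q1 x p1 p2) q2 * deriv (fun x => G q1 q2 p1 x) p2
  - deriv (fun x => F q1 q2 x p2) p1 * deriv (fun x => G x q2 p1 p2) q1
  - deriv (fun x => F q1 q2 p1 x) p2 * deriv (fun x => G q1 x p1 p2) q2

noncomputable def H (a b : ℝ) (q1 q2 p1 p2 : ℝ) : ℝ :=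
  p1 ^ 2 + p2 ^ 2 + a * q1 ^ (-(2 : ℝ) / 3) + b * q2 ^ (-(2 : ℝ) / 3)

noncomputable def Y6 (a b : ℝ) (q1 q2 p1 p2 : ℝ) : ℝ :=
  p1 ^ 2 * p2 ^ 2 * (p1 * q2 - p2 * q1) ^ 2
  + 2 * (p1 * q2 - p2 * q1) *
      (a * p2 ^ 2 * (q2 * p1 - 2 * q1 * p2) * q1 ^ (-(2 : ℝ) / 3)
       + b * p1 ^ 2 * (2 * q2 * p1 - q1 * p2) * q2 ^ (-(2 : ℝ) / 3))
  + a ^ 2 * q2 ^ 2 * p2 ^ 2 * q1 ^ (-(4 : ℝ) / 3)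
  + 2 * a * b * (4 * q2 ^ 2 * p1 ^ 2 - 9 * q1 * q2 * p1 * p2 + 4 * q1 ^ 2 * p2 ^ 2)
      * q1 ^ (-(2 : ℝ) / 3) * q2 ^ (-(2 : ℝ) / 3)
  + b ^ 2 * q1 ^ 2 * p1 ^ 2 * q2 ^ (-(4 : ℝ) / 3)
  + 4 * a * b * (a * q2 ^ ((4 : ℝ) / 3) * q1 ^ (-(4 : ℝ) / 3)
      + b * q1 ^ ((4 : ℝ) / 3) * q2 ^ (-(4 : ℝ) / 3))

/-!
Write `u = q₁^(-2/3)` and `v = q₂^(-2/3)`. Termwise differentiation gives `∂u/∂q₁ = -(2/3) u / q₁`,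
and the remaining fractional powers are `q₁^(-4/3) = u²` and `q₁^(4/3) = q₁² u` (likewise for `q₂`).
Hence `{H, Y₆}` is a rational function of `q₁, q₂, p₁, p₂, u, v`, and it vanishes identically,
even with `u` and `v` treated as independent variables.
-/

theorem rpow_neg_four_thirds_eq_sq {x : ℝ} (hx : 0 ≤ x) :
    x ^ (-(4 : ℝ) / 3) = (x ^ (-(2 : ℝ) / 3)) ^ 2 := by
  rw [← Real.rpow_natCast, ← Real.rpow_mul hx]
  norm_num

theorem rpow_four_thirds_eq_sq_mul {x : ℝ} (hx : 0 ≤ x) :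
    x ^ ((4 : ℝ) / 3) = x ^ 2 * x ^ (-(2 : ℝ) / 3) := by
  rw [← Real.rpow_natCast, ← Real.rpow_add' hx (by norm_num)]
  norm_num

theorem stmt10 (a b : ℝ) (q1 q2 p1 p2 : ℝ) (hq1 : 0 < q1) (hq2 : 0 < q2) :
    pb (H a b) (Y6 a b) q1 q2 p1 p2 = 0 := by
  have hq1ne : q1 ≠ 0 := hq1.ne'
  have hq2ne : q2 ≠ 0 := hq2.ne'
  simp (disch := fun_prop (disch := simp [*])) only [pb, H, Y6, deriv_fun_add, deriv_fun_sub,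
    deriv_fun_mul, deriv_fun_pow, deriv_const', deriv_id'', deriv_const_mul_id',
    Real.deriv_rpow_const]
  simp only [Real.rpow_sub_one hq1ne, Real.rpow_sub_one hq2ne, rpow_four_thirds_eq_sq_mul hq1.le,
    rpow_four_thirds_eq_sq_mul hq2.le, rpow_neg_four_thirds_eq_sq hq1.le,
    rpow_neg_four_thirds_eq_sq hq2.le]
  generalize q1 ^ (-(2 : ℝ) / 3) = u, q2 ^ (-(2 : ℝ) / 3) = v
  field_simp
  ring
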